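/- For τ ∈ (0,1), η ∈ ℝ, and G_η(ξ) = ½ + ξ − ξ_τ + ½e^{-2ξ}cos(2η) − 2τcosh²ξ cos²η/(1+τ) − 2τsinh²ξ sin²η/(1−τ), the function G_η is strictly negative for all ξ ≥ 0 with ξ ≠ ξ_τ = −½log τ. -/

import Mathlib

noncomputable def Gfun (τ η : ℝ) (ξ : ℝ) : ℝ :=
  1 / 2 + ξ - (-Real.log τ / 2) + Real.exp (-2 * ξ) * Real.cos (2 * η) / 2
    - 2 * τ * Real.cosh ξ ^ 2 * Real.cos η ^ 2 / (1 + τ)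
    - 2 * τ * Real.sinh ξ ^ 2 * Real.sin η ^ 2 / (1 - τ)

/-!
Since `e^{-2ξ_τ} = τ`, `G_η` vanishes at `ξ_τ`. Writing `u = e^{2ξ}` and `c = cos 2η`, the derivative
factors as `G_η'(ξ) = (1 - τu)((1 - τc)u - c + τ) / ((1 - τ²)u)`, and for `u > 1` the second factor is
`(1 - τc)(u - 1) + (1 - c)(1 + τ) > 0`. Hence `G_η` increases strictly on `[0, ξ_τ]` and decreases
strictly on `[ξ_τ, ∞)`.
-/

open Real Set

lemma hasDerivAt_Gfun {τ : ℝ} (η ξ : ℝ) (hτ₁ : τ ≠ 1) (hτ₂ : τ ≠ -1) :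
    HasDerivAt (Gfun τ η)
      (1 - exp (-2 * ξ) * cos (2 * η) - 2 * τ / (1 - τ ^ 2) * sinh (2 * ξ) * (1 - τ * cos (2 * η)))
      ξ := by
  have hexp : HasDerivAt (fun x => exp (-2 * x)) (exp (-2 * ξ) * (-2)) ξ :=
    ((hasDerivAt_id ξ).const_mul (-2)).exp.congr_deriv (by simp)
  have H := (((((hasDerivAt_id ξ).const_add (1 / 2)).sub_const (-log τ / 2)).add
      ((hexp.mul_const (cos (2 * η))).div_const 2)).sub
      ((((hasDerivAt_cosh ξ).pow 2).const_mul (2 * τ)).mul_const (cos η ^ 2) |>.div_const (1 + τ))).sub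
      ((((hasDerivAt_sinh ξ).pow 2).const_mul (2 * τ)).mul_const (sin η ^ 2) |>.div_const (1 - τ))
  refine H.congr_deriv ?_
  have h₁ : 1 - τ ≠ 0 := sub_ne_zero.mpr hτ₁.symm
  have h₂ : 1 + τ ≠ 0 := by contrapose! hτ₂; linarith
  rw [show 1 - τ ^ 2 = (1 - τ) * (1 + τ) by ring, sinh_two_mul, cos_two_mul, sin_sq]
  field_simp
  push_cast
  ring

lemma sub_add_pos_of_one_lt {τ c u : ℝ} (hτ : |τ| < 1) (hc : |c| ≤ 1) (hu : 1 < u) :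
    0 < (1 - τ * c) * u - c + τ := by
  have hτc : 0 < 1 - τ * c := by
    have : |τ * c| < 1 := by rw [abs_mul]; nlinarith [abs_nonneg τ, abs_nonneg c]
    linarith [le_abs_self (τ * c)]
  have h₁ : 0 ≤ (1 - c) * (1 + τ) :=
    mul_nonneg (by linarith [le_abs_self c]) (by linarith [neg_abs_le τ])
  nlinarith

lemma exists_pos_hasDerivAt_Gfun {τ : ℝ} (η : ℝ) (hτ₀ : 0 < τ) (hτ₁ : τ < 1) {x : ℝ} (hx : 0 < x) :
    ∃ p > 0, HasDerivAt (Gfun τ η) ((1 - τ * exp (2 * x)) * p) x := by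
  set u := exp (2 * x)
  set c := cos (2 * η)
  have hu : 1 < u := one_lt_exp_iff.mpr (by positivity)
  refine ⟨((1 - τ * c) * u - c + τ) / ((1 - τ ^ 2) * u), ?_, ?_⟩
  · refine div_pos (sub_add_pos_of_one_lt ?_ (abs_cos_le_one _) hu) (mul_pos ?_ (by linarith))
    · rw [abs_lt]; constructor <;> linarith
    · nlinarith
  · refine (hasDerivAt_Gfun η x hτ₁.ne (by linarith)).congr_deriv ?_
    have h₃ : 1 - τ ^ 2 ≠ 0 := by nlinarith
    have hu₀ : u ≠ 0 := by positivity
    rw [sinh_eq, show -2 * x = -(2 * x) by ring, exp_neg]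
    field_simp
    ring

lemma mul_exp_two_mul_lt_one_iff {τ : ℝ} (hτ : 0 < τ) (x : ℝ) :
    τ * exp (2 * x) < 1 ↔ x < -log τ / 2 := by
  rw [← exp_log hτ, ← exp_add, exp_lt_one_iff, log_exp]
  constructor <;> intro h <;> linarith

lemma one_lt_mul_exp_two_mul_iff {τ : ℝ} (hτ : 0 < τ) (x : ℝ) :
    1 < τ * exp (2 * x) ↔ -log τ / 2 < x := by
  rw [← exp_log hτ, ← exp_add, one_lt_exp_iff, log_exp]
  constructor <;> intro h <;> linarith

lemma Gfun_neg_log_div_two {τ : ℝ} (η : ℝ) (hτ₀ : 0 < τ) (hτ₁ : τ ≠ 1) :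
    Gfun τ η (-log τ / 2) = 0 := by
  set ξ := -log τ / 2
  have hexp : exp (-2 * ξ) = τ := by rw [show -2 * ξ = log τ by ring, exp_log hτ₀]
  have hcosh : cosh (2 * ξ) = (τ + τ⁻¹) / 2 := by
    rw [show 2 * ξ = -log τ by ring, cosh_neg, cosh_log hτ₀]
  have hcosh_sq : cosh ξ ^ 2 = (τ + τ⁻¹ + 2) / 4 := by linarith [cosh_two_mul ξ, cosh_sq ξ]
  have hsinh_sq : sinh ξ ^ 2 = (τ + τ⁻¹ - 2) / 4 := by linarith [cosh_sq ξ]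
  have h₁ : 1 - τ ≠ 0 := sub_ne_zero.mpr hτ₁.symm
  have h₂ : 1 + τ ≠ 0 := by linarith
  unfold Gfun
  rw [hexp, hcosh_sq, hsinh_sq, cos_two_mul, sin_sq]
  field_simp
  ring

lemma Gfun_strictMonoOn {τ : ℝ} (η : ℝ) (hτ₀ : 0 < τ) (hτ₁ : τ < 1) :
    StrictMonoOn (Gfun τ η) (Icc 0 (-log τ / 2)) := by
  refine strictMonoOn_of_deriv_pos (convex_Icc _ _)
    (fun x _ => (hasDerivAt_Gfun η x hτ₁.ne (by linarith)).continuousAt.continuousWithinAt) ?_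
  rw [interior_Icc]
  rintro x ⟨hx₀, hx⟩
  obtain ⟨p, hp, hderiv⟩ := exists_pos_hasDerivAt_Gfun η hτ₀ hτ₁ hx₀
  rw [hderiv.deriv]
  exact mul_pos (sub_pos.mpr ((mul_exp_two_mul_lt_one_iff hτ₀ x).mpr hx)) hp

lemma Gfun_strictAntiOn {τ : ℝ} (η : ℝ) (hτ₀ : 0 < τ) (hτ₁ : τ < 1) :
    StrictAntiOn (Gfun τ η) (Ici (-log τ / 2)) := by
  refine strictAntiOn_of_deriv_neg (convex_Ici _)
    (fun x _ => (hasDerivAt_Gfun η x hτ₁.ne (by linarith)).continuousAt.continuousWithinAt) ?_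
  rw [interior_Ici]
  intro x hx
  have hx₀ : 0 < x := lt_of_le_of_lt (by linarith [log_neg hτ₀ hτ₁]) hx
  obtain ⟨p, hp, hderiv⟩ := exists_pos_hasDerivAt_Gfun η hτ₀ hτ₁ hx₀
  rw [hderiv.deriv]
  exact mul_neg_of_neg_of_pos (sub_neg.mpr ((one_lt_mul_exp_two_mul_iff hτ₀ x).mpr hx)) hp

theorem Gfun_neg_off_xitau (τ η : ℝ) (hτ0 : 0 < τ) (hτ1 : τ < 1) :
    ∀ ξ : ℝ, 0 ≤ ξ → ξ ≠ -Real.log τ / 2 → Gfun τ η ξ < 0 := by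
  intro ξ hξ hne
  have hξτ : 0 ≤ -log τ / 2 := by linarith [log_neg hτ0 hτ1]
  rw [← Gfun_neg_log_div_two η hτ0 hτ1.ne]
  rcases hne.lt_or_gt with hlt | hgt
  · exact Gfun_strictMonoOn η hτ0 hτ1 ⟨hξ, hlt.le⟩ ⟨hξτ, le_rfl⟩ hlt
  · exact Gfun_strictAntiOn η hτ0 hτ1 self_mem_Ici hgt.le hgt
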